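/- arXiv:alg-geom/9609002 — 4 statements merged into one kernel-verified Lean document; each statement's English description precedes it below -/
import Mathlib

section
/- Let f(x) = a_n x^n + ... + a_0 be a real polynomial with a_0 ≠ 0, a_n ≠ 0, all of whose roots are real. Let Λ be the set of pairs (r,s) with 0 ≤ r < s ≤ n such that a_r ≠ 0, a_s ≠ 0, and a_i = 0 for all r < i < s, and let Λ' = {(r,s) ∈ Λ : r + s is odd}. If p_+ (resp. p_-) denotes the number of positive (resp. negative) roots of f counted with multiplicity, then p_+ - p_- = -∑_{(r,s)∈Λ'} sgn(a_r a_s). -/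
open Polynomial

open List

/-- Sign of a real number as an integer. -/
noncomputable def sgn (t : ℝ) : ℤ := if 0 < t then 1 else if t < 0 then -1 else 0

lemma sgn_zero : sgn 0 = 0 := by simp [sgn]

lemma sgn_pos {x : ℝ} (h : 0 < x) : sgn x = 1 := by simp [sgn, h]

lemma sgn_neg' {x : ℝ} (h : x < 0) : sgn x = -1 := by
  simp [sgn, h, not_lt_of_gt h, asymm h]

lemma sgn_eq_zero_iff {x : ℝ} : sgn x = 0 ↔ x = 0 := by
  constructor
  · intro h
    rcases lt_trichotomy x 0 with h'|h'|h'
    · rw [sgn_neg' h'] at h; omega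
    · exact h'
    · rw [sgn_pos h'] at h; omega
  · rintro rfl; exact sgn_zero

lemma sgn_ne_zero {x : ℝ} (h : x ≠ 0) : sgn x = 1 ∨ sgn x = -1 := by
  rcases lt_or_gt_of_ne h with h'|h'
  · right; exact sgn_neg' h'
  · left; exact sgn_pos h'

lemma sgn_mul (x y : ℝ) : sgn (x * y) = sgn x * sgn y := by
  rcases lt_trichotomy x 0 with h|h|h <;> rcases lt_trichotomy y 0 with h'|h'|h' <;>
    simp [h, h', sgn_zero, sgn_pos, sgn_neg', mul_pos, mul_neg_of_pos_of_neg,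
      mul_neg_of_neg_of_pos, mul_pos_of_neg_of_neg]

lemma sgn_neg (x : ℝ) : sgn (-x) = -sgn x := by
  rcases lt_trichotomy x 0 with h|h|h
  · rw [sgn_pos (by linarith : (0:ℝ) < -x), sgn_neg' h]; ring
  · simp [h, sgn_zero]
  · rw [sgn_neg' (by linarith : -x < 0), sgn_pos h]

lemma sgn_mul_pos {c : ℝ} (hc : 0 < c) (x : ℝ) : sgn (c * x) = sgn x := by
  rw [sgn_mul, sgn_pos hc, one_mul]

/-- number of adjacent sign changes -/
def chg : List ℤ → ℕ
  | [] => 0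
  | [_] => 0
  | a :: b :: t => (if a = b then 0 else 1) + chg (b :: t)

lemma chg_cons_cons (a b : ℤ) (t : List ℤ) :
    chg (a :: b :: t) = (if a = b then 0 else 1) + chg (b :: t) := rfl

lemma chg_append_singleton (s : List ℤ) (a : ℤ) :
    chg (s ++ [a]) = chg s + if s.getLastD a = a then 0 else 1 := by
  induction s with
  | nil => simp [chg]
  | cons x t ih =>
    cases t with
    | nil =>
      simp only [List.singleton_append, chg_cons_cons, getLastD_eq_getLast?,
        getLast?_singleton, Option.getD_some]
      simp [chg]
    | cons y u =>
      rw [cons_append, cons_append, chg_cons_cons, ← cons_append, ih, chg_cons_cons]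
      simp only [getLastD_eq_getLast?, getLast?_cons_cons]
      omega

lemma chg_map_neg (s : List ℤ) : chg (s.map (fun z => -z)) = chg s := by
  induction s with
  | nil => rfl
  | cons a t ih =>
    cases t with
    | nil => rfl
    | cons b u =>
      simp only [List.map_cons] at ih ⊢
      rw [chg_cons_cons, chg_cons_cons, ih]
      congr 1
      simp [neg_inj]

-- === part 2 ===
noncomputable def slist (l : List ℝ) : List ℤ := (l.filter (fun x => x ≠ 0)).map sgn

noncomputable def chgsf (l : List ℝ) : ℕ := chg (slist l)

noncomputable def lsgn (l : List ℝ) : ℤ := (slist l).getLastD 0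

lemma slist_append_singleton (l : List ℝ) (x : ℝ) :
    slist (l ++ [x]) = slist l ++ if x = 0 then [] else [sgn x] := by
  unfold slist
  rw [List.filter_append]
  split
  · next h => simp [h]
  · next h => simp [h]

lemma mem_slist_ne_zero {z : ℤ} {l : List ℝ} (h : z ∈ slist l) : z ≠ 0 := by
  unfold slist at h
  obtain ⟨x, hx, rfl⟩ := List.mem_map.mp h
  have := List.of_mem_filter hx
  simp only [decide_eq_true_eq] at this
  exact fun h0 => this (sgn_eq_zero_iff.mp h0)

lemma getLastD_irrel {l : List ℤ} (h : l ≠ []) (d d' : ℤ) : l.getLastD d = l.getLastD d' := by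
  rw [List.getLastD_eq_getLast?, List.getLastD_eq_getLast?,
    List.getLast?_eq_getLast h]
  simp

lemma lsgn_eq_zero_iff {l : List ℝ} : lsgn l = 0 ↔ slist l = [] := by
  constructor
  · intro h
    by_contra hne
    have : (slist l).getLastD 0 ∈ slist l := by
      rw [List.getLastD_eq_getLast?, List.getLast?_eq_getLast hne]
      simp [List.getLast_mem]
    exact mem_slist_ne_zero this h
  · intro h; simp [lsgn, h]

lemma lsgn_cases (l : List ℝ) : lsgn l = 0 ∨ lsgn l = 1 ∨ lsgn l = -1 := by
  by_cases h : slist l = []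
  · left; simp [lsgn, h]
  · right
    have hm : lsgn l ∈ slist l := by
      unfold lsgn
      rw [List.getLastD_eq_getLast?, List.getLast?_eq_getLast h]
      simp [List.getLast_mem]
    unfold slist at hm
    obtain ⟨x, hx, hs⟩ := List.mem_map.mp hm
    have := List.of_mem_filter hx
    simp only [decide_eq_true_eq] at this
    rcases sgn_ne_zero this with h1|h1 <;> rw [← hs, h1] <;> simp

lemma lsgn_append (l : List ℝ) (x : ℝ) :
    lsgn (l ++ [x]) = if x = 0 then lsgn l else sgn x := by
  unfold lsgn
  rw [slist_append_singleton]
  split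
  · simp
  · simp

lemma chgsf_append (l : List ℝ) (x : ℝ) :
    chgsf (l ++ [x]) = chgsf l +
      if x = 0 then 0 else (if lsgn l = 0 ∨ lsgn l = sgn x then 0 else 1) := by
  unfold chgsf
  rw [slist_append_singleton]
  split
  · next h => simp
  · next h =>
    rw [chg_append_singleton]
    congr 1
    by_cases hs : slist l = []
    · have : lsgn l = 0 := lsgn_eq_zero_iff.mpr hs
      simp [hs, this]
    · rw [getLastD_irrel hs _ 0]
      have : (slist l).getLastD 0 = lsgn l := rfl
      rw [this]
      have hlz : lsgn l ≠ 0 := fun hh => hs (lsgn_eq_zero_iff.mp hh)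
      by_cases h2 : lsgn l = sgn x <;> simp [h2, hlz]

/-- partial sums with accumulator -/
def psums (a : ℝ) : List ℝ → List ℝ
  | [] => []
  | x :: t => (a + x) :: psums (a + x) t


lemma psums_append (a : ℝ) (l : List ℝ) (x : ℝ) :
    psums a (l ++ [x]) = psums a l ++ [a + l.sum + x] := by
  induction l generalizing a with
  | nil => simp [psums]
  | cons y t ih =>
    simp only [List.cons_append, psums, List.append_eq]
    rw [ih]
    simp [add_assoc]

def ee (s t : ℤ) : ℕ := if t ≠ 0 ∧ s ≠ t then 1 else 0

lemma sgn_add_eq {S x : ℝ} (hS : S ≠ 0) (h : sgn x = sgn S) : sgn (S + x) = sgn S := by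
  rcases lt_or_gt_of_ne hS with h'|h'
  · have hx : x < 0 := by
      by_contra hx
      push_neg at hx
      rcases eq_or_lt_of_le hx with h2|h2
      · rw [← h2, sgn_zero, sgn_neg' h'] at h; omega
      · rw [sgn_pos h2, sgn_neg' h'] at h; omega
    rw [sgn_neg' (by linarith), sgn_neg' h']
  · have hx : 0 < x := by
      by_contra hx
      push_neg at hx
      rcases eq_or_lt_of_le hx with h2|h2
      · rw [h2, sgn_zero, sgn_pos h'] at h; omega
      · rw [sgn_neg' h2, sgn_pos h'] at h; omega
    rw [sgn_pos (by linarith), sgn_pos h']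

lemma key (q : List ℝ) :
    chgsf (psums 0 q) + ee (lsgn q) (lsgn (psums 0 q)) ≤ chgsf q ∧
      (q.sum ≠ 0 → lsgn (psums 0 q) = sgn q.sum) := by
  induction q using List.reverseRecOn with
  | nil => simp [psums, chgsf, slist, chg, lsgn, ee]
  | append_singleton q x ih =>
    obtain ⟨ih1, ih2⟩ := ih
    rw [psums_append, zero_add, List.sum_append, List.sum_singleton]
    rw [chgsf_append, chgsf_append, lsgn_append, lsgn_append]
    refine ⟨?_, fun hTne => by rw [if_neg hTne]⟩
    have hineq : (if q.sum + x = 0 then 0 else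
          if lsgn (psums 0 q) = 0 ∨ lsgn (psums 0 q) = sgn (q.sum + x) then 0 else 1) +
        ee (if x = 0 then lsgn q else sgn x)
          (if q.sum + x = 0 then lsgn (psums 0 q) else sgn (q.sum + x)) ≤
        (if x = 0 then 0 else if lsgn q = 0 ∨ lsgn q = sgn x then 0 else 1) +
          ee (lsgn q) (lsgn (psums 0 q)) := by
      by_cases hx : x = 0
      · subst hx
        rw [add_zero]
        by_cases hT0 : q.sum = 0
        · simp [hT0]
        · have hPS : lsgn (psums 0 q) = sgn q.sum := ih2 hT0
          simp [hT0, hPS, if_pos rfl]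
      · by_cases hT0 : q.sum + x = 0
        · rw [if_pos hT0, if_pos hT0, if_neg hx, if_neg hx]
          rcases lsgn_cases (psums 0 q) with hP1|hP1|hP1 <;>
            rcases sgn_ne_zero hx with hsx|hsx <;>
            rcases lsgn_cases q with hu1|hu1|hu1 <;>
            simp [ee, hP1, hsx, hu1]
        · rw [if_neg hT0, if_neg hT0, if_neg hx, if_neg hx]
          by_cases hS0 : q.sum = 0
          · have hTx : sgn (q.sum + x) = sgn x := by rw [hS0, zero_add]
            rw [hTx]
            rcases lsgn_cases (psums 0 q) with hP1|hP1|hP1 <;>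
              rcases sgn_ne_zero hx with hsx|hsx <;>
              rcases lsgn_cases q with hu1|hu1|hu1 <;>
              simp [ee, hP1, hsx, hu1]
          · have hPS : lsgn (psums 0 q) = sgn q.sum := ih2 hS0
            have hsame : sgn x = sgn q.sum → sgn (q.sum + x) = sgn q.sum :=
              fun h => sgn_add_eq hS0 h
            rcases sgn_ne_zero hS0 with hv|hv <;>
              rcases sgn_ne_zero hx with hsx|hsx <;>
              rcases sgn_ne_zero hT0 with hw|hw <;>
              rcases lsgn_cases q with hu1|hu1|hu1 <;>
              simp_all [ee, hPS, hv, hsx, hw, hu1]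
    omega

-- ==== part 3 ====
noncomputable def coefflist (f : Polynomial ℝ) : List ℝ :=
  (List.range (f.natDegree + 1)).map f.coeff

lemma slist_map (h : ℕ → ℝ) (L : List ℕ) :
    slist (L.map h) = (L.filter (fun i => h i ≠ 0)).map (fun i => sgn (h i)) := by
  unfold slist
  rw [List.filter_map, List.map_map]
  rfl

lemma slist_congr {L : List ℕ} {h h' : ℕ → ℝ} (H : ∀ i ∈ L, sgn (h i) = sgn (h' i)) :
    slist (L.map h) = slist (L.map h') := by
  rw [slist_map, slist_map]
  have hfil : L.filter (fun i => h i ≠ 0) = L.filter (fun i => h' i ≠ 0) := by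
    apply List.filter_congr
    intro i hi
    have : h i = 0 ↔ h' i = 0 := by
      rw [← sgn_eq_zero_iff, ← sgn_eq_zero_iff, H i hi]
    simp [this]
  rw [hfil]
  apply List.map_congr_left
  intro i hi
  exact H i (List.mem_of_mem_filter hi)

lemma psums_map_range' (F G : ℕ → ℝ) (hrec : ∀ i, G (i + 1) = G i + F (i + 1)) :
    ∀ (n i : ℕ), psums (G i) ((List.range' (i + 1) n).map F) = (List.range' (i + 1) n).map G := by
  intro n
  induction n with
  | zero => simp [psums]
  | succ m ih =>
    intro i
    rw [List.range'_succ, List.map_cons, List.map_cons, psums, ← hrec]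
    have := ih (i + 1)
    rw [show i + 1 + 1 = (i + 1) + 1 from rfl] at this
    rw [this]

lemma psums_map_range (F G : ℕ → ℝ) (h0 : G 0 = F 0)
    (hrec : ∀ i, G (i + 1) = G i + F (i + 1)) (k : ℕ) :
    psums 0 ((List.range (k + 1)).map F) = (List.range (k + 1)).map G := by
  have h1 : List.range (k + 1) = 0 :: List.range' 1 k := by
    rw [List.range_eq_range', List.range'_succ]
  rw [h1, List.map_cons, List.map_cons, psums, zero_add, ← h0]
  have := psums_map_range' F G hrec k 0
  rw [this]

lemma getLastD_map_neg (s : List ℤ) : ∀ d, (s.map (fun z => -z)).getLastD (-d) = -(s.getLastD d) := by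
  induction s with
  | nil => intro d; rfl
  | cons a t ih =>
    intro d
    rw [List.map_cons, List.getLastD_cons, List.getLastD_cons, ih a]

lemma chgsf_mult (g : Polynomial ℝ) (hg : g ≠ 0) {c : ℝ} (hc : 0 < c) :
    chgsf (coefflist g) + 1 ≤ chgsf (coefflist ((X - C c) * g)) := by
  have hXc : (X - C c) ≠ 0 := X_sub_C_ne_zero c
  have hf0 : (X - C c) * g ≠ 0 := mul_ne_zero hXc hg
  set m := g.natDegree with hm
  have hdeg : ((X - C c) * g).natDegree = m + 1 := by
    rw [natDegree_mul hXc hg, natDegree_X_sub_C]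
    omega
  have hcoeff : ∀ i, ((X - C c) * g).coeff (i + 1) = g.coeff i - c * g.coeff (i + 1) := by
    intro i
    rw [sub_mul, coeff_sub, coeff_X_mul, coeff_C_mul]
  have hcoeff0 : ((X - C c) * g).coeff 0 = -c * g.coeff 0 := by
    rw [mul_coeff_zero, coeff_sub, coeff_X_zero, coeff_C_zero]
    ring
  set F : ℕ → ℝ := fun i => ((X - C c) * g).coeff i * c ^ i with hF
  set G : ℕ → ℝ := fun i => -c ^ (i + 1) * g.coeff i with hG
  have hG0 : G 0 = F 0 := by simp [hF, hG, hcoeff0]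
  have hrec : ∀ i, G (i + 1) = G i + F (i + 1) := by
    intro i
    simp only [hF, hG, hcoeff]
    ring
  have hps : psums 0 ((List.range (m + 2)).map F) = (List.range (m + 2)).map G :=
    psums_map_range F G hG0 hrec (m + 1)
  -- identify chgsf q with chgsf (coefflist f')
  have hq_slist : slist ((List.range (m + 2)).map F) = slist (coefflist ((X - C c) * g)) := by
    unfold coefflist
    rw [hdeg]
    apply slist_congr
    intro i _
    rw [hF]
    simp only
    rw [mul_comm, sgn_mul_pos (pow_pos hc i)]
  -- identify slist of G-map with negated slist of coefflist g (extended)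
  have hGsl : slist ((List.range (m + 2)).map G) =
      (slist ((List.range (m + 2)).map g.coeff)).map (fun z => -z) := by
    rw [slist_map, slist_map, List.map_map]
    have hfil : (List.range (m + 2)).filter (fun i => G i ≠ 0) =
        (List.range (m + 2)).filter (fun i => g.coeff i ≠ 0) := by
      apply List.filter_congr
      intro i _
      have hcne : -c ^ (i + 1) ≠ 0 := by
        have := pow_pos hc (i + 1); intro h; rw [neg_eq_zero] at h; linarith
      simp only [hG, ne_eq, mul_eq_zero, decide_eq_decide]
      tauto
    rw [hfil]
    apply List.map_congr_left
    intro i _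
    simp only [Function.comp, hG]
    rw [show -c ^ (i + 1) * g.coeff i = -(c ^ (i + 1) * g.coeff i) by ring, sgn_neg,
      sgn_mul_pos (pow_pos hc (i + 1))]
  have hext : slist ((List.range (m + 2)).map g.coeff) = slist (coefflist g) := by
    unfold coefflist
    rw [show m + 2 = (m + 1) + 1 from rfl, List.range_succ, List.map_append, List.map_singleton,
      slist_append_singleton]
    rw [if_pos (coeff_eq_zero_of_natDegree_lt (by omega : g.natDegree < m + 1))]
    simp
    rfl
  have hkey := key ((List.range (m + 2)).map F)
  obtain ⟨hkey1, _⟩ := hkey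
  rw [hps] at hkey1
  -- compute the chg and lsgn pieces
  have e1 : chgsf ((List.range (m + 2)).map G) = chgsf (coefflist g) := by
    unfold chgsf
    rw [hGsl, chg_map_neg, hext]
  have e2 : chgsf ((List.range (m + 2)).map F) = chgsf (coefflist ((X - C c) * g)) := by
    unfold chgsf; rw [hq_slist]
  -- last signs
  have hlcg : g.coeff m ≠ 0 := by
    rw [hm, ← leadingCoeff]
    exact leadingCoeff_ne_zero.mpr hg
  have hlsg : lsgn (coefflist g) = sgn (g.coeff m) := by
    unfold coefflist
    rw [List.range_succ, List.map_append, List.map_singleton, lsgn_append, if_neg hlcg]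
  have hlsG : lsgn ((List.range (m + 2)).map G) = -sgn (g.coeff m) := by
    unfold lsgn
    rw [hGsl, hext, show (0 : ℤ) = -0 by ring, getLastD_map_neg]
    unfold lsgn at hlsg
    rw [hlsg]
  have hlsq : lsgn ((List.range (m + 2)).map F) = sgn (g.coeff m) := by
    rw [show m + 2 = (m + 1) + 1 from rfl, List.range_succ, List.map_append, List.map_singleton,
      lsgn_append]
    have hlc' : ((X - C c) * g).coeff (m + 1) = g.coeff m * 1 := by
      have : ((X - C c) * g).coeff (m + 1) = ((X - C c) * g).leadingCoeff := by
        rw [leadingCoeff, hdeg]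
      rw [this, leadingCoeff_mul, (monic_X_sub_C c).leadingCoeff, one_mul, mul_one, hm,
        ← leadingCoeff]
    have hFne : F (m + 1) ≠ 0 := by
      simp only [hF, hlc', mul_one]
      exact mul_ne_zero hlcg (by positivity)
    rw [if_neg hFne, hF]
    simp only [hlc', mul_one]
    rw [mul_comm, sgn_mul_pos (pow_pos hc (m + 1))]
  -- the ee value is 1
  have hee : ee (lsgn ((List.range (m + 2)).map F)) (lsgn ((List.range (m + 2)).map G)) = 1 := by
    rw [hlsq, hlsG]
    unfold ee
    rcases sgn_ne_zero hlcg with h|h <;> rw [h] <;> norm_num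
  rw [e1, e2, hee] at hkey1
  omega

lemma descartes : ∀ (k : ℕ) (f : Polynomial ℝ), f ≠ 0 →
    (f.roots.filter (fun x => 0 < x)).card = k → k ≤ chgsf (coefflist f) := by
  intro k
  induction k with
  | zero => intro f _ _; exact Nat.zero_le _
  | succ k ih =>
    intro f hf hcard
    have hex : ∃ c, c ∈ f.roots.filter (fun x => 0 < x) := by
      rw [← Multiset.card_pos_iff_exists_mem, hcard]; omega
    obtain ⟨c, hc⟩ := hex
    rw [Multiset.mem_filter] at hc
    have hroot : f.IsRoot c := isRoot_of_mem_roots hc.1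
    have hfe : (X - C c) * (f /ₘ (X - C c)) = f := mul_divByMonic_eq_iff_isRoot.mpr hroot
    set g := f /ₘ (X - C c) with hgdef
    have hg : g ≠ 0 := fun h => hf (by rw [← hfe, h, mul_zero])
    have hroots : f.roots = c ::ₘ g.roots := by
      conv_lhs => rw [← hfe]
      rw [roots_mul (by rw [hfe]; exact hf), roots_X_sub_C]
      rfl
    have hcard' : (g.roots.filter (fun x => 0 < x)).card = k := by
      rw [hroots, Multiset.filter_cons, if_pos hc.2] at hcard
      simp only [Multiset.card_add, Multiset.card_singleton] at hcard
      omega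
    have h1 := ih g hg hcard'
    have h2 := chgsf_mult g hg hc.2
    rw [hfe] at h2
    omega

-- ==== part 4 ====

lemma coeff_comp_neg_X (f : Polynomial ℝ) (i : ℕ) :
    (f.comp (-X)).coeff i = (-1) ^ i * f.coeff i := by
  induction f using Polynomial.induction_on' with
  | add p q hp hq => simp [add_comp, hp, hq]; ring
  | monomial n a =>
    simp only [monomial_comp]
    rw [show (-X : Polynomial ℝ) = C (-1) * X by simp, mul_pow, ← C_pow, coeff_monomial]
    rw [show C a * (C ((-1:ℝ)^n) * X ^ n) = C (a * (-1)^n) * X^n by rw [C_mul]; ring]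
    rw [coeff_C_mul, coeff_X_pow]
    by_cases h : n = i
    · subst h; simp; ring
    · simp [h, Ne.symm h]

lemma natDegree_comp_neg_X (f : Polynomial ℝ) : (f.comp (-X)).natDegree = f.natDegree := by
  rw [natDegree_comp, natDegree_neg, natDegree_X, mul_one]

lemma comp_neg_X_ne_zero {f : Polynomial ℝ} (hf : f ≠ 0) : f.comp (-X) ≠ 0 := by
  intro h
  apply hf
  have : (f.comp (-X)).comp (-X) = f := by
    rw [comp_assoc, neg_comp, X_comp, neg_neg, comp_X]
  rw [h, zero_comp] at this
  exact this.symm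

lemma roots_comp_neg_X (f : Polynomial ℝ) (hf : f ≠ 0)
    (hsplit : Multiset.card f.roots = f.natDegree) :
    (f.comp (-X)).roots = f.roots.map (fun x => -x) := by
  have hfe := C_leadingCoeff_mul_prod_multiset_X_sub_C hsplit
  have hlc : f.leadingCoeff ≠ 0 := leadingCoeff_ne_zero.mpr hf
  set n := Multiset.card f.roots with hn
  have hcomp : f.comp (-X) =
      C (f.leadingCoeff * (-1) ^ n) * (Multiset.map (fun a => X - C a) (f.roots.map (fun x => -x))).prod := by
    conv_lhs => rw [← hfe]
    rw [mul_comp, C_comp, multiset_prod_comp, Multiset.map_map]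
    have hmapeq : Multiset.map ((fun p => p.comp (-X)) ∘ fun a => X - C a) f.roots =
        Multiset.map (fun a => (-1 : Polynomial ℝ) * (X - C (-a))) f.roots := by
      apply Multiset.map_congr rfl
      intro a _
      simp only [Function.comp_apply, sub_comp, X_comp, C_comp]
      rw [C_neg]
      ring
    rw [hmapeq, Multiset.prod_map_mul]
    have h1 : (Multiset.map (fun _ => (-1 : Polynomial ℝ)) f.roots).prod = (-1 : Polynomial ℝ) ^ n := by
      rw [show (fun _ => (-1 : Polynomial ℝ)) = Function.const ℝ (-1 : Polynomial ℝ) from rfl,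
        Multiset.map_const, Multiset.prod_replicate]
    have h2 : ((-1 : Polynomial ℝ)) ^ n = C ((-1 : ℝ) ^ n) := by
      rw [← C_1, ← C_neg, ← C_pow]
    rw [h1, Multiset.map_map, h2, C_mul]
    have h3 : Multiset.map ((fun a => X - C a) ∘ fun x => -x) f.roots =
        Multiset.map (fun a => X - C (-a)) f.roots := by
      apply Multiset.map_congr rfl
      intro a _
      simp
    rw [h3]
    ring
  rw [hcomp, roots_C_mul _ (by simp [hlc]), roots_multiset_prod_X_sub_C]

lemma count_roots_split (f : Polynomial ℝ) (h0 : f.coeff 0 ≠ 0)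
    (hsplit : Multiset.card f.roots = f.natDegree) :
    (f.roots.filter (fun x => 0 < x)).card + (f.roots.filter (fun x => x < 0)).card
      = f.natDegree := by
  have hmem : ∀ x ∈ f.roots, (x < 0 ↔ ¬ 0 < x) := by
    intro x hx
    have : x ≠ 0 := by
      intro h
      apply h0
      rw [coeff_zero_eq_eval_zero]
      have := isRoot_of_mem_roots hx
      rwa [h] at this
    constructor
    · intro h; linarith
    · intro h; rcases lt_or_gt_of_ne this with h'|h'; exact h'; exact absurd h' h
  rw [Multiset.filter_congr hmem]
  rw [← Multiset.card_add, Multiset.filter_add_not, hsplit]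

-- ==== part 5 : index-list bounds and pair sums ====

lemma chg_pair_bound {a b : ℕ} {σ τ : ℕ → ℤ} (hab : a < b)
    (hsa : σ a = 1 ∨ σ a = -1) (hsb : σ b = 1 ∨ σ b = -1)
    (hta : τ a = (-1) ^ a * σ a) (htb : τ b = (-1) ^ b * σ b) :
    ((if σ a = σ b then 0 else 1) : ℤ) + (if τ a = τ b then 0 else 1) + a ≤ b := by
  rcases Nat.even_or_odd a with ha|ha <;> rcases Nat.even_or_odd b with hb|hb <;>
    [rw [ha.neg_one_pow] at hta; rw [ha.neg_one_pow] at hta;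
     rw [ha.neg_one_pow] at hta; rw [ha.neg_one_pow] at hta] <;>
    [rw [hb.neg_one_pow] at htb; rw [hb.neg_one_pow] at htb;
     rw [hb.neg_one_pow] at htb; rw [hb.neg_one_pow] at htb] <;>
    [obtain ⟨k, hk⟩ := ha; obtain ⟨k, hk⟩ := ha; obtain ⟨k, hk⟩ := ha; obtain ⟨k, hk⟩ := ha] <;>
    [obtain ⟨j, hj⟩ := hb; obtain ⟨j, hj⟩ := hb; obtain ⟨j, hj⟩ := hb; obtain ⟨j, hj⟩ := hb] <;>
    rcases hsa with h1|h1 <;> rcases hsb with h2|h2 <;>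
    simp only [hta, htb, h1, h2, one_mul, neg_mul, neg_neg] <;>
    norm_num <;> omega

lemma chg_bound (σ τ : ℕ → ℤ) : ∀ (l : List ℕ), List.Chain' (· < ·) l →
    (∀ i ∈ l, σ i = 1 ∨ σ i = -1) → (∀ i ∈ l, τ i = (-1) ^ i * σ i) →
    (chg (l.map σ) : ℤ) + chg (l.map τ) + l.headD 0 ≤ l.getLastD 0 := by
  intro l
  induction l with
  | nil => simp [chg]
  | cons a t ih =>
    intro hch hσ hτ
    cases t with
    | nil => simp [chg, List.getLastD]
    | cons b t' =>
      have hab : a < b := (List.isChain_cons_cons.mp hch).1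
      have hch' : List.Chain' (· < ·) (b :: t') := (List.isChain_cons_cons.mp hch).2
      have ihb := ih hch' (fun i hi => hσ i (List.mem_cons_of_mem a hi))
        (fun i hi => hτ i (List.mem_cons_of_mem a hi))
      simp only [List.map_cons, chg_cons_cons, List.headD_cons] at ihb ⊢
      have hgl : (a :: b :: t' : List ℕ).getLastD 0 = (b :: t' : List ℕ).getLastD 0 := by
        simp only [List.getLastD_cons]
      rw [hgl]
      have hpair := chg_pair_bound hab (hσ a (List.mem_cons_self))
        (hσ b (List.mem_cons_of_mem a (List.mem_cons_self)))
        (hτ a (List.mem_cons_self))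
        (hτ b (List.mem_cons_of_mem a (List.mem_cons_self)))
      push_cast
      push_cast at ihb
      omega

/-- adjacent pairs -/
def pairs (l : List ℕ) : List (ℕ × ℕ) := l.zip l.tail

lemma pairs_cons_cons (a b : ℕ) (t : List ℕ) :
    pairs (a :: b :: t) = (a, b) :: pairs (b :: t) := rfl

lemma mem_pairs : ∀ (l : List ℕ), List.Chain' (· < ·) l → ∀ (r s : ℕ),
    ((r, s) ∈ pairs l ↔ r ∈ l ∧ s ∈ l ∧ r < s ∧ ∀ i ∈ l, ¬(r < i ∧ i < s)) := by
  intro l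
  induction l with
  | nil => intro _ r s; simp [pairs]
  | cons a t ih =>
    intro hch r s
    cases t with
    | nil =>
      constructor
      · intro h; exact absurd h (by simp [pairs])
      · rintro ⟨hr, hs, hrs, -⟩
        simp only [List.mem_singleton] at hr hs
        omega
    | cons b t' =>
      have hab : a < b := (List.isChain_cons_cons.mp hch).1
      have hch' : List.Chain' (· < ·) (b :: t') := (List.isChain_cons_cons.mp hch).2
      have hlt : ∀ i ∈ b :: t', a < i := by
        intro i hi
        have hp : List.Pairwise (· < ·) (a :: b :: t') := List.isChain_iff_pairwise.mp hch
        exact (List.pairwise_cons.mp hp).1 i hi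
      have hltb : ∀ i ∈ b :: t', b ≤ i := by
        intro i hi
        rcases List.mem_cons.mp hi with rfl|hi'
        · exact le_refl i
        · have hp : List.Pairwise (· < ·) (b :: t') := List.isChain_iff_pairwise.mp hch'
          exact le_of_lt ((List.pairwise_cons.mp hp).1 i hi')
      rw [pairs_cons_cons]
      constructor
      · intro hmem
        rcases List.mem_cons.mp hmem with heq|hmem'
        · have h1 : r = a := congrArg Prod.fst heq
          have h2 : s = b := congrArg Prod.snd heq
          subst h1; subst h2
          refine ⟨List.mem_cons_self,
            List.mem_cons_of_mem _ (List.mem_cons_self), hab, ?_⟩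
          intro i hi
          rcases List.mem_cons.mp hi with rfl|hi'
          · omega
          · have := hltb i hi'
            omega
        · have := (ih hch' r s).mp hmem'
          refine ⟨List.mem_cons_of_mem a this.1, List.mem_cons_of_mem a this.2.1,
            this.2.2.1, ?_⟩
          intro i hi
          rcases List.mem_cons.mp hi with rfl|hi'
          · intro ⟨hri, _⟩
            have h2 := hlt r this.1
            omega
          · exact this.2.2.2 i hi'
      · rintro ⟨hr, hs, hrs, hbet⟩
        rcases List.mem_cons.mp hr with rfl|hr'
        · rcases List.mem_cons.mp hs with rfl|hs'
          · omega
          · have : s = b := by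
              rcases List.mem_cons.mp hs' with h|h
              · exact h
              · exfalso
                have hbs : b < s := by
                  have hp : List.Pairwise (· < ·) (b :: t') := List.isChain_iff_pairwise.mp hch'
                  exact (List.pairwise_cons.mp hp).1 s h
                exact hbet b (List.mem_cons_of_mem _ (List.mem_cons_self)) ⟨hab, hbs⟩
            subst this
            exact List.mem_cons_self
        · apply List.mem_cons_of_mem
          rw [ih hch' r s]
          have har : a < r := hlt r hr'
          have hs' : s ∈ b :: t' := by
            rcases List.mem_cons.mp hs with rfl|h
            · omega
            · exact h
          exact ⟨hr', hs', hrs, fun i hi hcon => hbet i (List.mem_cons_of_mem a hi) hcon⟩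

lemma pairs_nodup : ∀ (l : List ℕ), List.Chain' (· < ·) l → (pairs l).Nodup := by
  intro l
  induction l with
  | nil => intro _; simp [pairs]
  | cons a t ih =>
    intro hch
    cases t with
    | nil => simp [pairs]
    | cons b t' =>
      have hch' : List.Chain' (· < ·) (b :: t') := (List.isChain_cons_cons.mp hch).2
      have hlt : ∀ i ∈ b :: t', a < i := by
        intro i hi
        have hp : List.Pairwise (· < ·) (a :: b :: t') := List.isChain_iff_pairwise.mp hch
        exact (List.pairwise_cons.mp hp).1 i hi
      rw [pairs_cons_cons]
      refine List.Nodup.cons ?_ (ih hch')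
      intro hmem
      have : (a : ℕ) ∈ b :: t' := (List.of_mem_zip hmem).1
      exact absurd (hlt a this) (lt_irrefl a)

-- ==== part 6 ====

lemma sgn_neg_one_pow_mul (i : ℕ) (x : ℝ) :
    sgn ((-1) ^ i * x) = (-1) ^ i * sgn x := by
  rcases Nat.even_or_odd i with h|h
  · rw [(h.neg_one_pow : ((-1:ℝ))^i = 1), (h.neg_one_pow : ((-1:ℤ))^i = 1), one_mul, one_mul]
  · rw [(h.neg_one_pow : ((-1:ℝ))^i = -1), (h.neg_one_pow : ((-1:ℤ))^i = -1)]
    rw [show (-1:ℝ) * x = -x by ring, sgn_neg]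
    ring

lemma pair_term (co : ℕ → ℝ) {a b : ℕ} (ha0 : co a ≠ 0) (hb0 : co b ≠ 0) :
    (if Odd (a + b) then sgn (co a * co b) else 0) =
      ((if ((-1:ℤ)) ^ a * sgn (co a) = ((-1:ℤ)) ^ b * sgn (co b) then 0 else 1) : ℤ) -
        (if sgn (co a) = sgn (co b) then 0 else 1) := by
  rcases Nat.even_or_odd a with ha|ha <;> rcases Nat.even_or_odd b with hb|hb
  · have hno : ¬ Odd (a + b) := by
      rw [Nat.odd_iff]; obtain ⟨k, hk⟩ := ha; obtain ⟨j, hj⟩ := hb; omega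
    rw [if_neg hno, ha.neg_one_pow, hb.neg_one_pow, one_mul, one_mul]
    rcases sgn_ne_zero ha0 with h1|h1 <;> rcases sgn_ne_zero hb0 with h2|h2 <;>
      simp [h1, h2]
  · have hyes : Odd (a + b) := by
      rw [Nat.odd_iff]; obtain ⟨k, hk⟩ := ha; obtain ⟨j, hj⟩ := hb; omega
    rw [if_pos hyes, ha.neg_one_pow, hb.neg_one_pow, one_mul, sgn_mul]
    rcases sgn_ne_zero ha0 with h1|h1 <;> rcases sgn_ne_zero hb0 with h2|h2 <;>
      simp [h1, h2]
  · have hyes : Odd (a + b) := by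
      rw [Nat.odd_iff]; obtain ⟨k, hk⟩ := ha; obtain ⟨j, hj⟩ := hb; omega
    rw [if_pos hyes, ha.neg_one_pow, hb.neg_one_pow, one_mul, sgn_mul]
    rcases sgn_ne_zero ha0 with h1|h1 <;> rcases sgn_ne_zero hb0 with h2|h2 <;>
      simp [h1, h2]
  · have hno : ¬ Odd (a + b) := by
      rw [Nat.odd_iff]; obtain ⟨k, hk⟩ := ha; obtain ⟨j, hj⟩ := hb; omega
    rw [if_neg hno, ha.neg_one_pow, hb.neg_one_pow]
    rcases sgn_ne_zero ha0 with h1|h1 <;> rcases sgn_ne_zero hb0 with h2|h2 <;>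
      simp [h1, h2]

lemma pairsum (co : ℕ → ℝ) : ∀ (l : List ℕ), (∀ i ∈ l, co i ≠ 0) →
    ((pairs l).map (fun p => if Odd (p.1 + p.2) then sgn (co p.1 * co p.2) else 0)).sum =
      (chg (l.map (fun i => ((-1:ℤ)) ^ i * sgn (co i))) : ℤ) -
        chg (l.map (fun i => sgn (co i))) := by
  intro l
  induction l with
  | nil => simp [pairs, chg]
  | cons a t ih =>
    intro hl
    cases t with
    | nil => simp [pairs, chg]
    | cons b t' =>
      have ihb := ih (fun i hi => hl i (List.mem_cons_of_mem a hi))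
      rw [pairs_cons_cons, List.map_cons, List.sum_cons, ihb]
      simp only [List.map_cons, chg_cons_cons]
      have := pair_term co (hl a (List.mem_cons_self))
        (hl b (List.mem_cons_of_mem a (List.mem_cons_self)))
      push_cast
      rw [this]
      ring

lemma sum_map_filter_eq (l : List (ℕ × ℕ)) (g : ℕ × ℕ → ℤ) :
    ((l.filter (fun p => Odd (p.1 + p.2))).map g).sum =
      (l.map (fun p => if Odd (p.1 + p.2) then g p else 0)).sum := by
  induction l with
  | nil => rfl
  | cons x t ih =>
    by_cases h : Odd (x.1 + x.2)
    · rw [List.filter_cons_of_pos (by simpa using h), List.map_cons, List.sum_cons, ih,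
        List.map_cons, List.sum_cons, if_pos h]
    · rw [List.filter_cons_of_neg (by simpa using h), ih, List.map_cons, List.sum_cons,
        if_neg h, zero_add]

/-- Descartes-type formula: for a real polynomial with all roots real and
nonzero constant term, `p₊ - p₋ = -∑_{(r,s)∈Λ'} sgn (a_r a_s)`. -/
theorem stmt0 (f : Polynomial ℝ) (hf : f ≠ 0) (h0 : f.coeff 0 ≠ 0)
    (hsplit : (f.roots.card : ℕ) = f.natDegree) :
    ((f.roots.filter fun x => 0 < x).card : ℤ) -
      ((f.roots.filter fun x => x < 0).card : ℤ) =
    -∑ p ∈ ((Finset.range (f.natDegree + 1)) ×ˢ (Finset.range (f.natDegree + 1))).filter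
        (fun p => p.1 < p.2 ∧ f.coeff p.1 ≠ 0 ∧ f.coeff p.2 ≠ 0 ∧
          (∀ i ∈ Finset.Ioo p.1 p.2, f.coeff i = 0) ∧ Odd (p.1 + p.2)),
      sgn (f.coeff p.1 * f.coeff p.2) := by
  classical
  set n := f.natDegree with hn
  set l : List ℕ := (List.range (n + 1)).filter (fun i => f.coeff i ≠ 0) with hl
  have hmeml : ∀ i, i ∈ l ↔ i < n + 1 ∧ f.coeff i ≠ 0 := by
    intro i
    rw [hl, List.mem_filter, List.mem_range]
    simp
  have hchain : List.Chain' (· < ·) l := by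
    rw [List.Chain', List.isChain_iff_pairwise]
    exact List.Pairwise.sublist List.filter_sublist List.pairwise_lt_range
  set σ : ℕ → ℤ := fun i => sgn (f.coeff i) with hσdef
  set τ : ℕ → ℤ := fun i => ((-1:ℤ)) ^ i * sgn (f.coeff i) with hτdef
  have hσ : ∀ i ∈ l, σ i = 1 ∨ σ i = -1 := by
    intro i hi
    exact sgn_ne_zero ((hmeml i).mp hi).2
  -- chgsf of coefflist f is chg (l.map σ)
  have hA : chgsf (coefflist f) = chg (l.map σ) := by
    unfold chgsf coefflist
    rw [← hn, slist_map]
  -- positive roots bound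
  have hpos : (f.roots.filter (fun x => 0 < x)).card ≤ chg (l.map σ) := by
    rw [← hA]
    exact descartes _ f hf rfl
  -- negative roots bound via comp
  set g := f.comp (-X) with hg
  have hgne : g ≠ 0 := comp_neg_X_ne_zero hf
  have hgcount : (g.roots.filter (fun x => 0 < x)).card =
      (f.roots.filter (fun x => x < 0)).card := by
    rw [hg, roots_comp_neg_X f hf hsplit, Multiset.filter_map]
    rw [Multiset.card_map]
    congr 1
    apply Multiset.filter_congr
    intro x _
    simp only [Function.comp_apply]
    constructor
    · intro h; linarith
    · intro h; linarith
  have hB : chgsf (coefflist g) = chg (l.map τ) := by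
    unfold chgsf coefflist
    rw [natDegree_comp_neg_X, ← hn, slist_map]
    have hfil : (List.range (n + 1)).filter (fun i => g.coeff i ≠ 0) = l := by
      rw [hl]
      apply List.filter_congr
      intro i _
      rw [hg, coeff_comp_neg_X]
      have : (-1:ℝ) ^ i ≠ 0 := by positivity
      simp [this]
    rw [hfil]
    congr 1
    apply List.map_congr_left
    intro i _
    rw [hg, coeff_comp_neg_X, sgn_neg_one_pow_mul]
  have hneg : (f.roots.filter (fun x => x < 0)).card ≤ chg (l.map τ) := by
    rw [← hB, ← hgcount]
    exact descartes _ g hgne rfl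
  -- upper bound
  have hub : (chg (l.map σ) : ℤ) + chg (l.map τ) ≤ n := by
    have hb := chg_bound σ τ l hchain hσ (fun i _ => rfl)
    have hlast : (l.getLastD 0 : ℤ) ≤ n := by
      by_cases hle : l = []
      · simp [hle]
      · have : l.getLastD 0 ∈ l := by
          rw [List.getLastD_eq_getLast?, List.getLast?_eq_getLast hle]
          simp [List.getLast_mem]
        have := ((hmeml _).mp this).1
        omega
    have hhead : (0 : ℤ) ≤ l.headD 0 := by positivity
    omega
  -- count
  have hcount := count_roots_split f h0 hsplit
  -- squeeze
  have heq1 : ((f.roots.filter (fun x => 0 < x)).card : ℤ) = chg (l.map σ) := by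
    push_cast at hub ⊢
    omega
  have heq2 : ((f.roots.filter (fun x => x < 0)).card : ℤ) = chg (l.map τ) := by
    push_cast at hub ⊢
    omega
  -- identify the Finset with the pairs list
  have hfin : ((Finset.range (n + 1)) ×ˢ (Finset.range (n + 1))).filter
        (fun p => p.1 < p.2 ∧ f.coeff p.1 ≠ 0 ∧ f.coeff p.2 ≠ 0 ∧
          (∀ i ∈ Finset.Ioo p.1 p.2, f.coeff i = 0) ∧ Odd (p.1 + p.2)) =
      ((pairs l).filter (fun p => Odd (p.1 + p.2))).toFinset := by
    apply Finset.ext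
    rintro ⟨r, s⟩
    rw [Finset.mem_filter, Finset.mem_product, Finset.mem_range, Finset.mem_range,
      List.mem_toFinset, List.mem_filter]
    simp only [decide_eq_true_eq]
    rw [mem_pairs l hchain r s]
    constructor
    · rintro ⟨⟨hr, hs⟩, hrs, hr0, hs0, hbet, hodd⟩
      refine ⟨⟨(hmeml r).mpr ⟨hr, hr0⟩, (hmeml s).mpr ⟨hs, hs0⟩, hrs, ?_⟩, hodd⟩
      intro i hi ⟨h1, h2⟩
      exact ((hmeml i).mp hi).2 (hbet i (Finset.mem_Ioo.mpr ⟨h1, h2⟩))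
    · rintro ⟨⟨hr, hs, hrs, hbet⟩, hodd⟩
      obtain ⟨hr1, hr2⟩ := (hmeml r).mp hr
      obtain ⟨hs1, hs2⟩ := (hmeml s).mp hs
      refine ⟨⟨hr1, hs1⟩, hrs, hr2, hs2, ?_, hodd⟩
      intro i hi
      rw [Finset.mem_Ioo] at hi
      by_contra hic
      exact hbet i ((hmeml i).mpr ⟨by omega, hic⟩) ⟨hi.1, hi.2⟩
  rw [hfin]
  have hnodup : ((pairs l).filter (fun p => Odd (p.1 + p.2))).Nodup :=
    (pairs_nodup l hchain).filter _
  rw [List.sum_toFinset _ hnodup]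
  rw [sum_map_filter_eq (pairs l) (fun p => sgn (f.coeff p.1 * f.coeff p.2))]
  rw [pairsum f.coeff l (fun i hi => ((hmeml i).mp hi).2)]
  rw [heq1, heq2]
  ring
end

section
/- Let F : (ℝ^m, 0) → (ℝ^m, 0) be given by polynomials f_1, ..., f_m, let I ⊆ ℝ[[x_1,...,x_m]] be the ideal generated by f_1, ..., f_m, and suppose Q = ℝ[[x]]/I is finite-dimensional over ℝ. Then 0 is an isolated point of F^{-1}(0). -/
lemma stmt6_pow_mem {m : ℕ} (I : Ideal (MvPowerSeries (Fin m) ℝ))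
    (hfin : FiniteDimensional ℝ (MvPowerSeries (Fin m) ℝ ⧸ I)) (i : Fin m) :
    ∃ N : ℕ, (MvPowerSeries.X i : MvPowerSeries (Fin m) ℝ) ^ N ∈ I := by
  haveI : Module.Finite ℝ (MvPowerSeries (Fin m) ℝ ⧸ I) := hfin
  have hint : IsIntegral ℝ (Ideal.Quotient.mk I (MvPowerSeries.X i)) :=
    IsIntegral.of_finite ℝ _
  obtain ⟨p, hp, hpz⟩ := hint
  have hp0 : p ≠ 0 := hp.ne_zero
  set k := p.rootMultiplicity 0 with hk
  set q := p /ₘ (Polynomial.X - Polynomial.C 0) ^ k with hqdef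
  have hfac : (Polynomial.X - Polynomial.C 0) ^ k * q = p :=
    Polynomial.pow_mul_divByMonic_rootMultiplicity_eq p 0
  have hq0 : Polynomial.eval 0 q ≠ 0 :=
    Polynomial.eval_divByMonic_pow_rootMultiplicity_ne_zero 0 hp0
  have hmem : Polynomial.aeval (MvPowerSeries.X i : MvPowerSeries (Fin m) ℝ) p ∈ I := by
    rw [← Ideal.Quotient.eq_zero_iff_mem, ← hpz]
    exact (Polynomial.aeval_algHom_apply (Ideal.Quotient.mkₐ ℝ I)
      (MvPowerSeries.X i : MvPowerSeries (Fin m) ℝ) p).symm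
  have hc : MvPowerSeries.constantCoeff
      (Polynomial.aeval (MvPowerSeries.X i : MvPowerSeries (Fin m) ℝ) q)
      = Polynomial.eval 0 q := by
    rw [Polynomial.aeval_def, Polynomial.hom_eval₂, MvPowerSeries.constantCoeff_X]
    have h2 : (MvPowerSeries.constantCoeff (σ := Fin m) (R := ℝ)).comp
        (algebraMap ℝ (MvPowerSeries (Fin m) ℝ)) = RingHom.id ℝ := by
      ext r
      simp [MvPowerSeries.algebraMap_apply]
    rw [h2]
    simp [Polynomial.eval]
  have hu : IsUnit (Polynomial.aeval (MvPowerSeries.X i : MvPowerSeries (Fin m) ℝ) q) := by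
    rw [MvPowerSeries.isUnit_iff_constantCoeff, hc]
    exact isUnit_iff_ne_zero.mpr hq0
  obtain ⟨v, hv⟩ := hu
  refine ⟨k, ?_⟩
  have hXk : (MvPowerSeries.X i : MvPowerSeries (Fin m) ℝ) ^ k * (v : MvPowerSeries (Fin m) ℝ) ∈ I := by
    have h3 : Polynomial.aeval (MvPowerSeries.X i : MvPowerSeries (Fin m) ℝ) p
        = (MvPowerSeries.X i : MvPowerSeries (Fin m) ℝ) ^ k * (v : MvPowerSeries (Fin m) ℝ) := by
      rw [← hfac, map_mul, map_pow, map_sub, Polynomial.aeval_X, map_zero, hv]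
      simp
    rwa [h3] at hmem
  have h4 := I.mul_mem_right ((v⁻¹ : (MvPowerSeries (Fin m) ℝ)ˣ) : MvPowerSeries (Fin m) ℝ) hXk
  rwa [mul_assoc, Units.mul_inv, mul_one] at h4

lemma stmt6_eval_bound {m : ℕ} (h : MvPolynomial (Fin m) ℝ) (N : ℕ)
    (hh : ∀ d ∈ h.support, N ≤ d.sum fun _ e => e) (x : Fin m → ℝ) (r : ℝ)
    (hr0 : 0 ≤ r) (hr1 : r ≤ 1) (hx : ∀ j, |x j| ≤ r) :
    |MvPolynomial.eval x h| ≤ (∑ d ∈ h.support, |MvPolynomial.coeff d h|) * r ^ N := by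
  rw [MvPolynomial.eval_eq]
  refine (Finset.abs_sum_le_sum_abs _ _).trans ?_
  rw [Finset.sum_mul]
  refine Finset.sum_le_sum fun d hd => ?_
  rw [abs_mul]
  refine mul_le_mul_of_nonneg_left ?_ (abs_nonneg _)
  calc |∏ j ∈ d.support, x j ^ d j| = ∏ j ∈ d.support, |x j| ^ d j := by
        rw [Finset.abs_prod]; simp_rw [abs_pow]
    _ ≤ ∏ j ∈ d.support, r ^ d j :=
        Finset.prod_le_prod (fun _ _ => pow_nonneg (abs_nonneg _) _)
          (fun j _ => pow_le_pow_left₀ (abs_nonneg _) (hx j) _)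
    _ = r ^ (d.sum fun _ e => e) := by
        rw [Finset.prod_pow_eq_pow_sum]; rfl
    _ ≤ r ^ N := pow_le_pow_of_le_one hr0 hr1 (hh d hd)

/-- If the quotient of the formal power series ring by the ideal generated by the
components of a polynomial map `F : ℝ^m → ℝ^m` with `F 0 = 0` is finite-dimensional
over `ℝ`, then `0` is an isolated point of `F⁻¹(0)`. -/
theorem stmt6 {m : ℕ} (f : Fin m → MvPolynomial (Fin m) ℝ)
    (hf0 : ∀ i, MvPolynomial.eval (0 : Fin m → ℝ) (f i) = 0)
    (I : Ideal (MvPowerSeries (Fin m) ℝ))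
    (hI : I = Ideal.span (Set.range fun i => ((f i : MvPowerSeries (Fin m) ℝ))))
    (hfin : FiniteDimensional ℝ (MvPowerSeries (Fin m) ℝ ⧸ I)) :
    ∃ U ∈ nhds (0 : Fin m → ℝ), ∀ x ∈ U, (∀ i, MvPolynomial.eval x (f i) = 0) → x = 0 := by
  classical
  rcases Nat.eq_zero_or_pos m with hm | hm
  · subst hm
    refine ⟨Set.univ, Filter.univ_mem, fun x _ _ => ?_⟩
    exact funext fun j => j.elim0
  haveI : Nonempty (Fin m) := ⟨⟨0, hm⟩⟩
  choose Ni hNi using fun i => stmt6_pow_mem I hfin i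
  set N := Finset.univ.sup Ni with hNdef
  have hXN : ∀ i, (MvPowerSeries.X i : MvPowerSeries (Fin m) ℝ) ^ N ∈ I := by
    intro i
    have h1 : Ni i ≤ N := Finset.le_sup (Finset.mem_univ i)
    have h2 := I.mul_mem_left ((MvPowerSeries.X i : MvPowerSeries (Fin m) ℝ) ^ (N - Ni i)) (hNi i)
    rwa [← pow_add, Nat.sub_add_cancel h1] at h2
  have hg : ∀ i, ∃ g : Fin m → MvPowerSeries (Fin m) ℝ,
      ∑ j, g j * ((f j : MvPowerSeries (Fin m) ℝ)) = (MvPowerSeries.X i) ^ N := by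
    intro i
    rw [hI] at hXN
    exact (Ideal.mem_span_range_iff_exists_fun).mp (hXN i)
  choose g hgspec using hg
  set n : Fin m →₀ ℕ := Finsupp.equivFunOnFinite.symm (fun _ => N + 1) with hndef
  have hnj : ∀ j, n j = N + 1 := fun j => rfl
  set P : Fin m → Fin m → MvPolynomial (Fin m) ℝ :=
    fun i j => MvPowerSeries.trunc ℝ n (g i j) with hPdef
  set h : Fin m → MvPolynomial (Fin m) ℝ :=
    fun i => MvPolynomial.X i ^ N - ∑ j, P i j * f j with hhdef
  have hcomp : ∀ (d : Fin m →₀ ℕ) (j : Fin m), d j ≤ d.sum fun _ e => e := by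
    intro d j
    by_cases hj : j ∈ d.support
    · exact Finset.single_le_sum (fun _ _ => Nat.zero_le _) hj
    · simp [Finsupp.notMem_support_iff.mp hj]
  have keyi : ∀ i, ((h i : MvPolynomial (Fin m) ℝ) : MvPowerSeries (Fin m) ℝ)
      = ∑ j, (g i j - ((P i j : MvPolynomial (Fin m) ℝ) : MvPowerSeries (Fin m) ℝ))
          * ((f j : MvPolynomial (Fin m) ℝ) : MvPowerSeries (Fin m) ℝ) := by
    intro i
    have hc1 : ((h i : MvPolynomial (Fin m) ℝ) : MvPowerSeries (Fin m) ℝ)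
        = (MvPowerSeries.X i) ^ N
          - ∑ j, ((P i j : MvPolynomial (Fin m) ℝ) : MvPowerSeries (Fin m) ℝ)
              * ((f j : MvPolynomial (Fin m) ℝ) : MvPowerSeries (Fin m) ℝ) := by
      rw [show ((h i : MvPolynomial (Fin m) ℝ) : MvPowerSeries (Fin m) ℝ)
          = MvPolynomial.coeToMvPowerSeries.ringHom (h i) from rfl, hhdef]
      simp only [map_sub, map_pow, map_sum, map_mul,
        MvPolynomial.coeToMvPowerSeries.ringHom_apply, MvPolynomial.coe_X]
    rw [hc1, ← hgspec i, ← Finset.sum_sub_distrib]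
    refine Finset.sum_congr rfl fun j _ => ?_
    rw [sub_mul]
  have hsupp : ∀ i, ∀ d ∈ (h i).support, N + 1 ≤ d.sum fun _ e => e := by
    intro i d hd
    by_contra hcon
    push_neg at hcon
    have hds : d.sum (fun _ e => e) ≤ N := Nat.lt_succ_iff.mp hcon
    apply MvPolynomial.mem_support_iff.mp hd
    have h1 : MvPolynomial.coeff d (h i)
        = MvPowerSeries.coeff d ((h i : MvPolynomial (Fin m) ℝ) : MvPowerSeries (Fin m) ℝ) :=
      (MvPolynomial.coeff_coe _ _).symm
    rw [h1, keyi i, map_sum]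
    refine Finset.sum_eq_zero fun j _ => ?_
    rw [MvPowerSeries.coeff_mul]
    refine Finset.sum_eq_zero fun pq hpq => ?_
    rw [Finset.HasAntidiagonal.mem_antidiagonal] at hpq
    have hple : ∀ s, pq.1 s ≤ N := by
      intro s
      have : pq.1 s ≤ d s := by
        rw [← hpq]; exact Nat.le_add_right _ _
      exact le_trans (le_trans this (hcomp d s)) hds
    have hlt : pq.1 < n := by
      refine lt_of_le_of_ne ?_ ?_
      · intro s
        rw [hnj s]
        exact Nat.le_succ_of_le (hple s)
      · intro hcontra
        have := hnj (Classical.arbitrary (Fin m))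
        rw [← hcontra] at this
        exact absurd this (Nat.ne_of_lt (Nat.lt_succ_of_le (hple _)))
    have htr : MvPowerSeries.coeff pq.1 ((P i j : MvPolynomial (Fin m) ℝ) : MvPowerSeries (Fin m) ℝ)
        = MvPowerSeries.coeff pq.1 (g i j) := by
      rw [MvPolynomial.coeff_coe, hPdef]
      rw [MvPowerSeries.coeff_trunc, if_pos hlt]
    rw [map_sub, htr, sub_self, zero_mul]
  -- evaluation estimate setup
  set C : ℝ := ∑ i, ∑ d ∈ (h i).support, |MvPolynomial.coeff d (h i)| with hCdef
  have hC0 : 0 ≤ C := by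
    apply Finset.sum_nonneg
    intro i _
    exact Finset.sum_nonneg fun d _ => abs_nonneg _
  have hCi : ∀ i, ∑ d ∈ (h i).support, |MvPolynomial.coeff d (h i)| ≤ C := by
    intro i
    exact Finset.single_le_sum (f := fun i => ∑ d ∈ (h i).support, |MvPolynomial.coeff d (h i)|)
      (fun i _ => Finset.sum_nonneg fun d _ => abs_nonneg _) (Finset.mem_univ i)
  set ε : ℝ := min 1 (1 / (C + 1)) with hεdef
  have hε : 0 < ε := lt_min one_pos (by positivity)
  refine ⟨Metric.ball 0 ε, Metric.ball_mem_nhds 0 hε, fun x hx hfx => ?_⟩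
  by_contra hx0
  obtain ⟨j0, hj0⟩ : ∃ j, x j ≠ 0 := by
    by_contra hcc
    push_neg at hcc
    exact hx0 (funext hcc)
  obtain ⟨i0, -, hi0⟩ := Finset.exists_max_image Finset.univ (fun j => |x j|)
    ⟨j0, Finset.mem_univ _⟩
  set r : ℝ := |x i0| with hrdef
  have hrpos : 0 < r := lt_of_lt_of_le (abs_pos.mpr hj0) (hi0 j0 (Finset.mem_univ _))
  have hxr : ∀ j, |x j| ≤ r := fun j => hi0 j (Finset.mem_univ _)
  have hrε : r < ε := by
    have h1 : dist (x i0) ((0 : Fin m → ℝ) i0) ≤ dist x 0 := dist_le_pi_dist x 0 i0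
    have h2 : dist x 0 < ε := Metric.mem_ball.mp hx
    rw [Pi.zero_apply, Real.dist_eq, sub_zero] at h1
    exact lt_of_le_of_lt h1 h2
  have hr1 : r ≤ 1 := le_of_lt (lt_of_lt_of_le hrε (min_le_left _ _))
  have heval : MvPolynomial.eval x (h i0) = x i0 ^ N := by
    simp [hhdef, hfx]
  have hbound := stmt6_eval_bound (h i0) (N + 1) (hsupp i0) x r (le_of_lt hrpos) hr1 hxr
  rw [heval, abs_pow] at hbound
  have hchain : r ^ N ≤ (C * r) * r ^ N := by
    calc r ^ N ≤ (∑ d ∈ (h i0).support, |MvPolynomial.coeff d (h i0)|) * r ^ (N + 1) := hbound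
      _ ≤ C * r ^ (N + 1) := by
          apply mul_le_mul_of_nonneg_right (hCi i0) (pow_nonneg (le_of_lt hrpos) _)
      _ = (C * r) * r ^ N := by ring
  have hCr : C * r < 1 := by
    have h1 : r < 1 / (C + 1) := lt_of_lt_of_le hrε (min_le_right _ _)
    have h2 : C * r ≤ C * (1 / (C + 1)) := mul_le_mul_of_nonneg_left (le_of_lt h1) hC0
    have h3 : C * (1 / (C + 1)) < 1 := by
      rw [mul_one_div, div_lt_one (by linarith)]
      linarith
    linarith
  have hfinal : (C * r) * r ^ N < r ^ N :=
    mul_lt_of_lt_one_left (pow_pos hrpos N) hCr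
  linarith
end

section
/- Let F : ℂ^n → ℂ^n be a polynomial map of the form F(y) = P(y) + (y_1^k, ..., y_n^k), where each component of P has degree strictly less than k. Then F^{-1}(0) is a bounded subset of ℂ^n, hence finite. -/
open MvPolynomial

/-- The coercion from the dual space to functions, as a linear map. -/
noncomputable def stmt8CoeFn (R A : Type*) [CommSemiring R] [AddCommMonoid A] [Module R A] :
    Module.Dual R A →ₗ[R] (A → R) where
  toFun f := f
  map_add' _ _ := rfl
  map_smul' _ _ := rfl

/-- If `F : ℂⁿ → ℂⁿ` has components `P_i(y) + y_i^k` with `deg P_i < k`, then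
`F⁻¹(0)` is bounded, hence finite. -/
theorem stmt8 {n k : ℕ} (p : Fin n → MvPolynomial (Fin n) ℂ)
    (hdeg : ∀ i, (p i).totalDegree < k)
    (F : (Fin n → ℂ) → (Fin n → ℂ))
    (hF : ∀ (y : Fin n → ℂ) (i : Fin n), F y i = MvPolynomial.eval y (p i) + y i ^ k) :
    Bornology.IsBounded {y : Fin n → ℂ | F y = 0} ∧ {y : Fin n → ℂ | F y = 0}.Finite := by
  suffices h : {y : Fin n → ℂ | F y = 0}.Finite from ⟨h.isBounded, h⟩
  rcases Nat.eq_zero_or_pos n with hn | hn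
  · subst hn; exact Set.toFinite _
  have hk : 0 < k := lt_of_le_of_lt (Nat.zero_le _) (hdeg ⟨0, hn⟩)
  classical
  set I : Ideal (MvPolynomial (Fin n) ℂ) :=
    Ideal.span (Set.range fun i => p i + X i ^ k) with hI
  set mkI : MvPolynomial (Fin n) ℂ →+* MvPolynomial (Fin n) ℂ ⧸ I := Ideal.Quotient.mk I with hmk
  set G : Set (MvPolynomial (Fin n) ℂ ⧸ I) := Set.range fun f : Fin n → Fin k =>
    mkI (monomial (Finsupp.equivFunOnFinite.symm fun i => (f i : ℕ)) 1) with hGdef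
  -- Key : every element of the quotient lies in the span of `G`
  have key : ∀ N (q : MvPolynomial (Fin n) ℂ), q.totalDegree ≤ N →
      mkI q ∈ Submodule.span ℂ G := by
    intro N
    induction N using Nat.strong_induction_on with
    | _ N IH =>
      intro q hq
      rw [q.as_sum, map_sum]
      refine Submodule.sum_mem _ fun d hd => ?_
      have hdN : (d.sum fun _ e => e) ≤ N := (le_totalDegree hd).trans hq
      have hcd : coeff d q ≠ 0 := mem_support_iff.mp hd
      by_cases hcase : ∀ i, d i < k
      · have heq : mkI (monomial d (coeff d q)) = (coeff d q) • mkI (monomial d 1) := by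
          show Ideal.Quotient.mkₐ ℂ I (monomial d (coeff d q))
            = coeff d q • Ideal.Quotient.mkₐ ℂ I (monomial d 1)
          rw [← map_smul, smul_monomial, smul_eq_mul, mul_one]
        rw [heq]
        refine Submodule.smul_mem _ _ (Submodule.subset_span ?_)
        refine ⟨fun i => ⟨d i, hcase i⟩, ?_⟩
        have hfd : (Finsupp.equivFunOnFinite.symm fun i => ((⟨d i, hcase i⟩ : Fin k) : ℕ)) = d := by
          ext i; simp
        show mkI (monomial (Finsupp.equivFunOnFinite.symm
          fun i => ((⟨d i, hcase i⟩ : Fin k) : ℕ)) 1) = mkI (monomial d 1)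
        rw [hfd]
      · push_neg at hcase
        obtain ⟨i, hi⟩ := hcase
        set d' : Fin n →₀ ℕ := d - Finsupp.single i k with hd'
        have hdd : d = d' + Finsupp.single i k := by
          ext j
          by_cases hji : j = i
          · subst hji
            simp [hd', Nat.sub_add_cancel hi]
          · simp [hd', Finsupp.single_apply, Ne.symm hji, hji]
        have hsum : (d.sum fun _ e => e) = (d'.sum fun _ e => e) + k := by
          rw [hdd, Finsupp.sum_add_index' (fun _ => rfl) (fun _ _ _ => rfl),
            Finsupp.sum_single_index rfl]
        have hmono : monomial d (coeff d q)
            = monomial d' (coeff d q) * (p i + X i ^ k) - monomial d' (coeff d q) * p i := by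
          rw [mul_add, add_sub_cancel_left, X_pow_eq_monomial, monomial_mul, mul_one, ← hdd]
        rw [hmono, map_sub]
        have h0 : mkI (monomial d' (coeff d q) * (p i + X i ^ k)) = 0 := by
          rw [hmk, Ideal.Quotient.eq_zero_iff_mem]
          exact Ideal.mul_mem_left _ _ (Ideal.subset_span ⟨i, rfl⟩)
        rw [h0, zero_sub]
        refine Submodule.neg_mem _ ?_
        have h1 : (monomial d' (coeff d q) * p i).totalDegree
            ≤ (d'.sum fun _ e => e) + (p i).totalDegree := by
          refine (totalDegree_mul _ _).trans (Nat.add_le_add_right ?_ _)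
          exact totalDegree_monomial_le _ _
        have h2 := hdeg i
        have hdeg' : (monomial d' (coeff d q) * p i).totalDegree < N := by omega
        exact IH _ hdeg' _ le_rfl
  -- the quotient is a finite-dimensional ℂ-vector space
  have hspan : Submodule.span ℂ G = ⊤ := by
    rw [eq_top_iff]
    rintro a -
    obtain ⟨q, rfl⟩ := Ideal.Quotient.mk_surjective a
    exact key q.totalDegree q le_rfl
  haveI hfin : Module.Finite ℂ (MvPolynomial (Fin n) ℂ ⧸ I) :=
    ⟨Submodule.fg_def.mpr ⟨G, Set.finite_range _, hspan⟩⟩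
  -- each zero of F gives a character of the quotient
  set V := {y : Fin n → ℂ | F y = 0} with hV
  have hker : ∀ y : V, ∀ a ∈ I, (aeval (y : Fin n → ℂ) : MvPolynomial (Fin n) ℂ →ₐ[ℂ] ℂ) a = 0 := by
    intro y
    have hyz : F (y : Fin n → ℂ) = 0 := y.2
    rw [hI]
    intro a ha
    refine (Ideal.span_le (I := RingHom.ker
      ((aeval (y : Fin n → ℂ) : MvPolynomial (Fin n) ℂ →ₐ[ℂ] ℂ) : MvPolynomial (Fin n) ℂ →+* ℂ))).mpr ?_ ha
    rintro _ ⟨i, rfl⟩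
    have hFy : F (y : Fin n → ℂ) i = 0 := by rw [hyz]; rfl
    rw [hF] at hFy
    have haev : (aeval (y : Fin n → ℂ)) (p i) = eval (y : Fin n → ℂ) (p i) := by
      rw [← coe_aeval_eq_eval]; rfl
    simp only [SetLike.mem_coe, RingHom.mem_ker, AlgHom.coe_toRingHom, map_add, map_pow, aeval_X,
      haev]
    exact hFy
  let ψ : V → (MvPolynomial (Fin n) ℂ ⧸ I) →ₐ[ℂ] ℂ := fun y =>
    Ideal.Quotient.liftₐ I (aeval (y : Fin n → ℂ)) (hker y)
  have hψX : ∀ (y : V) (i : Fin n), ψ y (mkI (X i)) = (y : Fin n → ℂ) i := by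
    intro y i
    simp [ψ, hmk, Ideal.Quotient.liftₐ_apply, Ideal.Quotient.lift_mk]
  have hinj : Function.Injective fun y : V =>
      ((ψ y : (MvPolynomial (Fin n) ℂ ⧸ I) →* ℂ)) := by
    intro y z h
    ext1
    funext i
    have := congrArg (fun φ : (MvPolynomial (Fin n) ℂ ⧸ I) →* ℂ => φ (mkI (X i))) h
    simpa [hψX] using this
  have hLI : LinearIndependent ℂ fun y : V => (ψ y).toLinearMap := by
    apply LinearIndependent.of_comp (stmt8CoeFn ℂ (MvPolynomial (Fin n) ℂ ⧸ I))
    have h2 := (linearIndependent_monoidHom (MvPolynomial (Fin n) ℂ ⧸ I) ℂ).comp _ hinj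
    convert h2 using 1
    funext y
    rfl
  haveI : Finite V := hLI.finite
  exact Set.toFinite _
end

section
/- Let T be a nondegenerate real symmetric N×N matrix with characteristic polynomial P(λ) = a_N λ^N + ... + a_0 (so a_N = (-1)^N and a_0 = det T ≠ 0). Then signature(T) ≡ N + 1 + (-1)^{N+1} sgn((-1)^N det T) (mod 4). -/
/-- The signature (number of positive minus number of negative eigenvalues, with
multiplicity) of a real symmetric (Hermitian) matrix. -/
noncomputable def msig {N : ℕ} (A : Matrix (Fin N) (Fin N) ℝ) (hA : A.IsHermitian) : ℤ :=
  ((Finset.univ.filter fun i => 0 < hA.eigenvalues i).card : ℤ) -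
    ((Finset.univ.filter fun i => hA.eigenvalues i < 0).card : ℤ)

lemma sgn_mul_s13 (a b : ℝ) : sgn (a * b) = sgn a * sgn b := by
  unfold sgn
  rcases lt_trichotomy a 0 with ha|ha|ha <;> rcases lt_trichotomy b 0 with hb|hb|hb <;>
    subst_vars <;> simp_all <;> split_ifs <;> first | rfl | nlinarith

lemma sgn_prod {ι : Type*} (s : Finset ι) (f : ι → ℝ) :
    sgn (∏ i ∈ s, f i) = ∏ i ∈ s, sgn (f i) := by
  classical
  induction s using Finset.induction with
  | empty => simp [sgn]
  | @insert a s h ih => rw [Finset.prod_insert h, Finset.prod_insert h, sgn_mul_s13, ih]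

lemma sgn_neg_one_pow (N : ℕ) : sgn ((-1 : ℝ) ^ N) = (-1 : ℤ) ^ N := by
  rcases Nat.even_or_odd N with h | h <;>
    simp [sgn, h.neg_one_pow]

/-- For a nondegenerate real symmetric `N×N` matrix `T`,
`signature T ≡ N + 1 + (-1)^(N+1) sgn ((-1)^N det T) (mod 4)`. -/
theorem stmt13 {N : ℕ} (T : Matrix (Fin N) (Fin N) ℝ) (hT : T.IsHermitian)
    (hdet : T.det ≠ 0) :
    msig T hT ≡ (N : ℤ) + 1 + (-1) ^ (N + 1) * sgn ((-1) ^ N * T.det) [ZMOD 4] := by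
  classical
  set ev := hT.eigenvalues with hev
  have hdet' : T.det = ∏ i, ev i := by
    simpa using hT.det_eq_prod_eigenvalues
  have hne : ∀ i, ev i ≠ 0 := by
    intro i hi
    exact hdet (hdet' ▸ Finset.prod_eq_zero (Finset.mem_univ i) hi)
  set P := Finset.univ.filter fun i => 0 < ev i with hP
  set Q := Finset.univ.filter fun i => ev i < 0 with hQ
  have hdisj : Disjoint P Q := Finset.disjoint_left.2 (by
    intro i hiP hiQ
    simp only [hP, hQ, Finset.mem_filter] at hiP hiQ
    linarith [hiP.2, hiQ.2])
  have hunion : P ∪ Q = Finset.univ := by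
    ext i
    simp only [hP, hQ, Finset.mem_union, Finset.mem_filter, Finset.mem_univ, true_and,
      iff_true]
    rcases (hne i).lt_or_gt with h | h
    · exact Or.inr h
    · exact Or.inl h
  have hcard : P.card + Q.card = N := by
    rw [← Finset.card_union_of_disjoint hdisj, hunion, Finset.card_univ, Fintype.card_fin]
  have hsgn : sgn ((-1) ^ N * T.det) = (-1 : ℤ) ^ N * (-1) ^ Q.card := by
    rw [sgn_mul_s13, sgn_neg_one_pow, hdet', sgn_prod, ← hunion,
      Finset.prod_union hdisj]
    have h1 : ∏ i ∈ P, sgn (ev i) = 1 :=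
      Finset.prod_eq_one (by
        intro i hi
        simp only [hP, Finset.mem_filter] at hi
        simp [sgn, hi.2])
    have h2 : ∏ i ∈ Q, sgn (ev i) = (-1) ^ Q.card :=
      Finset.prod_eq_pow_card (by
        intro i hi
        simp only [hQ, Finset.mem_filter] at hi
        simp [sgn, hi.2, not_lt.2 hi.2.le])
    rw [h1, h2, one_mul]
  have hmsig : msig T hT = (P.card : ℤ) - Q.card := rfl
  rw [hmsig, hsgn]
  have hpow : ((-1 : ℤ)) ^ (N + 1) * ((-1) ^ N * (-1) ^ Q.card) = -(-1) ^ Q.card := by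
    rw [← mul_assoc, ← pow_add]
    have hodd : Odd (N + 1 + N) := ⟨N, by ring⟩
    rw [hodd.neg_one_pow]; ring
  rw [hpow]
  rcases Nat.even_or_odd Q.card with h | h <;>
    [rw [h.neg_one_pow]; rw [h.neg_one_pow]] <;>
    · obtain ⟨k, hk⟩ := h
      unfold Int.ModEq
      omega
end
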